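/- arXiv:2008.09298 — 5 statements merged into one kernel-verified Lean document; each statement's English description precedes it below -/
import Mathlib

section
/- For any two probability measures μ₁, μ₂ on a complete separable metric space (X, d), one has d_{W₁}(μ₁, μ₂) ≤ √Var(μ₁, μ₂) ≤ d_{W₁}(μ₁, μ₂) + √Var(μ₁) + √Var(μ₂), where d_{W₁} denotes the 1-Wasserstein distance. -/
open scoped ENNReal

open MeasureTheory

/-- The variance between two measures on a metric space:
`Var(μ, ν) = ∫∫ d²(x, y) dμ(x) dν(y)` (valued in `ℝ≥0∞`, may be `∞`). -/
noncomputable def Var {X : Type*} [MetricSpace X] [MeasurableSpace X]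
    (μ ν : Measure X) : ℝ≥0∞ :=
  ∫⁻ x, ∫⁻ y, edist x y ^ 2 ∂ν ∂μ

/-- The 1-Wasserstein distance: the infimum of `∫ d(x, y) dq(x, y)` over all
couplings `q` of `μ` and `ν` (valued in `ℝ≥0∞`, may be `∞`). -/
noncomputable def W1 {X : Type*} [MetricSpace X] [MeasurableSpace X]
    (μ ν : Measure X) : ℝ≥0∞ :=
  ⨅ (q : Measure (X × X)) (_ : q.map Prod.fst = μ ∧ q.map Prod.snd = ν),
    ∫⁻ p, edist p.1 p.2 ∂q

/-! The product measure `μ₁.prod μ₂` is a coupling, and by Cauchy–Schwarz its transport cost is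
at most `√Var(μ₁, μ₂)`. Conversely, for any coupling `q`, the triangle inequality through a
`q`-distributed pair gives `d(x, y) ≤ f x + ∫ d dq + g y` with `f x = ∫ d(x, ·) dμ₁` and
`g y = ∫ d(y, ·) dμ₂`. Taking `L²(μ₁ ⊗ μ₂)` norms, Minkowski's inequality together with Jensen's
`‖f‖₂ ≤ √Var(μ₁)` and `‖g‖₂ ≤ √Var(μ₂)` gives the upper bound. -/

section

variable {α β ε : Type*} [MeasurableSpace α] [MeasurableSpace β] [TopologicalSpace ε]
  [ContinuousENorm ε] {μ : Measure α} {ν : Measure β} {p : ℝ≥0∞}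

theorem eLpNorm_eLpNorm_eq_eLpNorm_prod [SFinite ν] {F : α × β → ε}
    (hF : AEStronglyMeasurable F (μ.prod ν)) (hp₀ : p ≠ 0) (hp : p ≠ ∞) :
    eLpNorm (fun x => eLpNorm (fun y => F (x, y)) p ν) p μ = eLpNorm F p (μ.prod ν) := by
  have hp_pos : 0 < p.toReal := ENNReal.toReal_pos hp₀ hp
  simp only [eLpNorm_eq_lintegral_rpow_enorm_toReal hp₀ hp, enorm_eq_self]
  rw [lintegral_prod _ (hF.enorm.pow_const _)]
  congr 1
  refine lintegral_congr fun x => ?_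
  rw [← ENNReal.rpow_mul, one_div_mul_cancel hp_pos.ne', ENNReal.rpow_one]

theorem eLpNorm_lintegral_le_eLpNorm_prod [IsProbabilityMeasure ν] {F : α × β → ℝ≥0∞}
    (hF : Measurable F) (hp₁ : 1 ≤ p) (hp : p ≠ ∞) :
    eLpNorm (fun x => ∫⁻ y, F (x, y) ∂ν) p μ ≤ eLpNorm F p (μ.prod ν) := by
  rw [← eLpNorm_eLpNorm_eq_eLpNorm_prod hF.aestronglyMeasurable
    (zero_lt_one.trans_le hp₁).ne' hp]
  refine eLpNorm_mono_enorm fun x => ?_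
  simpa [eLpNorm_one_eq_lintegral_enorm] using eLpNorm_le_eLpNorm_of_exponent_le hp₁
    (f := fun y => F (x, y)) (hF.comp measurable_prodMk_left).aestronglyMeasurable

end

section Triangle

variable {X : Type*} [PseudoEMetricSpace X] [MeasurableSpace X] [OpensMeasurableSpace X]
  {μ ν : Measure X}

theorem edist_le_lintegral_edist_add_of_map_eq {q : Measure (X × X)} [IsProbabilityMeasure q]
    (hq₁ : q.map Prod.fst = μ) (hq₂ : q.map Prod.snd = ν) (x y : X) :
    edist x y ≤ (∫⁻ x', edist x x' ∂μ) + (∫⁻ p, edist p.1 p.2 ∂q) + ∫⁻ y', edist y y' ∂ν := by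
  have hx : ∫⁻ x', edist x x' ∂μ = ∫⁻ p, edist x p.1 ∂q := by
    rw [← hq₁, lintegral_map measurable_edist_right measurable_fst]
  have hy : ∫⁻ y', edist y y' ∂ν = ∫⁻ p, edist y p.2 ∂q := by
    rw [← hq₂, lintegral_map measurable_edist_right measurable_snd]
  calc edist x y = ∫⁻ _, edist x y ∂q := by simp
    _ ≤ ∫⁻ p, edist x p.1 + edist p.1 p.2 + edist y p.2 ∂q := lintegral_mono fun p =>
      (edist_triangle4 x p.1 p.2 y).trans_eq (by rw [edist_comm p.2 y])
    _ = _ := by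
      rw [lintegral_add_right _ (by fun_prop), lintegral_add_left (by fun_prop), hx, hy]

end Triangle

section Variance

variable {X : Type*} [MetricSpace X] [SecondCountableTopology X] [MeasurableSpace X]
  [OpensMeasurableSpace X] {μ ν : Measure X}

theorem Var_rpow_half_eq_eLpNorm_edist (μ ν : Measure X) [SFinite ν] :
    Var μ ν ^ (1 / 2 : ℝ) = eLpNorm (fun p : X × X => edist p.1 p.2) 2 (μ.prod ν) := by
  rw [eLpNorm_eq_lintegral_rpow_enorm_toReal two_ne_zero ENNReal.ofNat_ne_top,
    lintegral_prod _ (measurable_edist.enorm.pow_const _).aemeasurable, Var]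
  simp only [ENNReal.toReal_ofNat, enorm_eq_self, ENNReal.rpow_two]

theorem eLpNorm_lintegral_edist_le_Var_rpow_half [IsProbabilityMeasure μ] :
    eLpNorm (fun x => ∫⁻ x', edist x x' ∂μ) 2 μ ≤ Var μ μ ^ (1 / 2 : ℝ) := by
  rw [Var_rpow_half_eq_eLpNorm_edist]
  exact eLpNorm_lintegral_le_eLpNorm_prod (F := fun p : X × X => edist p.1 p.2)
    measurable_edist one_le_two ENNReal.ofNat_ne_top

theorem Var_rpow_half_le_lintegral_edist_add [IsProbabilityMeasure μ] [IsProbabilityMeasure ν]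
    {q : Measure (X × X)} (hq₁ : q.map Prod.fst = μ) (hq₂ : q.map Prod.snd = ν) :
    Var μ ν ^ (1 / 2 : ℝ)
      ≤ (∫⁻ p, edist p.1 p.2 ∂q) + Var μ μ ^ (1 / 2 : ℝ) + Var ν ν ^ (1 / 2 : ℝ) := by
  have : IsProbabilityMeasure (q.map Prod.fst) := hq₁ ▸ inferInstance
  have : IsProbabilityMeasure q := Measure.isProbabilityMeasure_of_map Prod.fst
  set C := ∫⁻ p, edist p.1 p.2 ∂q
  set f := fun x => ∫⁻ x', edist x x' ∂μ
  set g := fun y => ∫⁻ y', edist y y' ∂ν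
  have hf : Measurable f := measurable_edist.lintegral_prod_right'
  have hg : Measurable g := measurable_edist.lintegral_prod_right'
  calc Var μ ν ^ (1 / 2 : ℝ) = eLpNorm (fun p : X × X => edist p.1 p.2) 2 (μ.prod ν) :=
        Var_rpow_half_eq_eLpNorm_edist μ ν
    _ ≤ eLpNorm ((f ∘ Prod.fst + fun _ => C) + g ∘ Prod.snd) 2 (μ.prod ν) :=
        eLpNorm_mono_enorm fun p => edist_le_lintegral_edist_add_of_map_eq hq₁ hq₂ p.1 p.2
    _ ≤ eLpNorm (f ∘ Prod.fst) 2 (μ.prod ν) + eLpNorm (fun _ => C) 2 (μ.prod ν)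
          + eLpNorm (g ∘ Prod.snd) 2 (μ.prod ν) := by
        have hf₁ : AEStronglyMeasurable (f ∘ Prod.fst) (μ.prod ν) :=
          (hf.comp measurable_fst).aestronglyMeasurable
        have hg₂ : AEStronglyMeasurable (g ∘ Prod.snd) (μ.prod ν) :=
          (hg.comp measurable_snd).aestronglyMeasurable
        exact (eLpNorm_add_le (hf₁.add aestronglyMeasurable_const) hg₂ one_le_two).trans
          (add_le_add_left (eLpNorm_add_le hf₁ aestronglyMeasurable_const one_le_two) _)
    _ = eLpNorm f 2 μ + C + eLpNorm g 2 ν := by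
        rw [eLpNorm_comp_measurePreserving hf.aestronglyMeasurable measurePreserving_fst,
          eLpNorm_comp_measurePreserving hg.aestronglyMeasurable measurePreserving_snd,
          eLpNorm_const' _ two_ne_zero ENNReal.ofNat_ne_top]
        simp
    _ ≤ C + Var μ μ ^ (1 / 2 : ℝ) + Var ν ν ^ (1 / 2 : ℝ) := by
        grw [eLpNorm_lintegral_edist_le_Var_rpow_half, eLpNorm_lintegral_edist_le_Var_rpow_half,
          add_comm (Var μ μ ^ _) C]

end Variance

theorem w1_le_sqrt_var_le_general {X : Type*} [MetricSpace X]
    [TopologicalSpace.SeparableSpace X] [MeasurableSpace X] [BorelSpace X]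
    (μ₁ μ₂ : Measure X) [IsProbabilityMeasure μ₁] [IsProbabilityMeasure μ₂] :
    W1 μ₁ μ₂ ≤ Var μ₁ μ₂ ^ (1 / 2 : ℝ) ∧
      Var μ₁ μ₂ ^ (1 / 2 : ℝ)
        ≤ W1 μ₁ μ₂ + Var μ₁ μ₁ ^ (1 / 2 : ℝ) + Var μ₂ μ₂ ^ (1 / 2 : ℝ) := by
  constructor
  · calc W1 μ₁ μ₂ ≤ ∫⁻ p, edist p.1 p.2 ∂(μ₁.prod μ₂) := iInf₂_le _ ⟨by simp, by simp⟩
      _ = eLpNorm (fun p : X × X => edist p.1 p.2) 1 (μ₁.prod μ₂) := by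
        simp [eLpNorm_one_eq_lintegral_enorm]
      _ ≤ eLpNorm (fun p : X × X => edist p.1 p.2) 2 (μ₁.prod μ₂) :=
        eLpNorm_le_eLpNorm_of_exponent_le one_le_two measurable_edist.aestronglyMeasurable
      _ = Var μ₁ μ₂ ^ (1 / 2 : ℝ) := (Var_rpow_half_eq_eLpNorm_edist μ₁ μ₂).symm
  · simp only [W1, ENNReal.iInf_add]
    exact le_iInf₂ fun q hq => Var_rpow_half_le_lintegral_edist_add hq.1 hq.2

/-- For probability measures `μ₁, μ₂` on a complete separable metric space,
`d_{W₁}(μ₁, μ₂) ≤ √Var(μ₁, μ₂) ≤ d_{W₁}(μ₁, μ₂) + √Var(μ₁) + √Var(μ₂)`. -/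
theorem w1_le_sqrt_var_le {X : Type*} [MetricSpace X] [CompleteSpace X]
    [TopologicalSpace.SeparableSpace X] [MeasurableSpace X] [BorelSpace X]
    (μ₁ μ₂ : Measure X) [IsProbabilityMeasure μ₁] [IsProbabilityMeasure μ₂] :
    W1 μ₁ μ₂ ≤ Var μ₁ μ₂ ^ (1 / 2 : ℝ) ∧
      Var μ₁ μ₂ ^ (1 / 2 : ℝ)
        ≤ W1 μ₁ μ₂ + Var μ₁ μ₁ ^ (1 / 2 : ℝ) + Var μ₂ μ₂ ^ (1 / 2 : ℝ) :=
  w1_le_sqrt_var_le_general μ₁ μ₂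
end

section
/- Let ν₁, ν₂ be probability measures on a metric space (X, d) with Var(ν₁, ν₂) < ∞. Then |∫∫ d(x₁, x₂) dν₁(x₁) dν₂(x₂) − √Var(ν₁, ν₂)| ≤ √Var(ν₁) + √Var(ν₂). -/
/-!
Write `A = ∫∫ d(x, y) dν₁ dν₂`. Cauchy–Schwarz gives `A ≤ √Var(ν₁, ν₂)`. Conversely, the triangle
inequality through independent points `x' ∼ ν₁`, `y' ∼ ν₂` gives
`d(x, y) ≤ D₁(x) + A + D₂(y)`, where `Dᵢ(x) = ∫ d(x, ·) dνᵢ`; Minkowski's inequality in `L²` together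
with `‖Dᵢ‖₂² ≤ Var(νᵢ)` yields `√Var(ν₁, ν₂) ≤ √Var(ν₁) + A + √Var(ν₂)`. Finiteness of `Var(νᵢ)`
follows from the triangle inequality through a point `z` with `∫ d²(z, ·) dν₂ < ∞`.

All integrals are iterated: on a non-separable space `d` need not be measurable for the product
σ-algebra, so Tonelli is unavailable; the functions `Dᵢ` are measurable because they are
1-Lipschitz.
-/

open scoped ENNReal

open MeasureTheory

namespace ENNReal

lemma rpow_half_pow_two (a : ℝ≥0∞) : (a ^ (1 / 2 : ℝ)) ^ 2 = a := by
  simpa [one_div] using rpow_inv_natCast_pow two_ne_zero a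

lemma pow_two_rpow_half (a : ℝ≥0∞) : (a ^ 2) ^ (1 / 2 : ℝ) = a := by
  simpa [one_div] using pow_rpow_inv_natCast two_ne_zero a

lemma add_sq_le (a b : ℝ≥0∞) : (a + b) ^ 2 ≤ 2 * (a ^ 2 + b ^ 2) := by
  induction a with
  | top => simp [mul_top]
  | coe a =>
    induction b with
    | top => simp [mul_top]
    | coe b => exact_mod_cast _root_.add_sq_le (a := a) (b := b)

lemma abs_toReal_sub_le_of_le_of_le_add {a b c d : ℝ≥0∞} (hb : b ≠ ∞) (hc : c ≠ ∞)
    (hd : d ≠ ∞) (hab : a ≤ b) (hba : b ≤ c + a + d) :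
    |a.toReal - b.toReal| ≤ c.toReal + d.toReal := by
  have ha : a ≠ ∞ := ne_top_of_le_ne_top hb hab
  have hab' : a.toReal ≤ b.toReal := toReal_mono hb hab
  have hba' : b.toReal ≤ c.toReal + a.toReal + d.toReal := by
    rw [← toReal_add hc ha, ← toReal_add (by finiteness) hd]
    exact toReal_mono (by finiteness) hba
  rw [abs_sub_comm, abs_of_nonneg (sub_nonneg.mpr hab')]
  linarith

end ENNReal

section ProbabilityMeasure

variable {α : Type*} [MeasurableSpace α] {μ : Measure α} [IsProbabilityMeasure μ]
  {f : α → ℝ≥0∞}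

lemma lintegral_le_rpow_half_lintegral_sq (hf : AEMeasurable f μ) :
    ∫⁻ a, f a ∂μ ≤ (∫⁻ a, f a ^ 2 ∂μ) ^ (1 / 2 : ℝ) := by
  simpa using ENNReal.lintegral_mul_le_Lp_mul_Lq μ .two_two hf aemeasurable_const (g := 1)

lemma sq_lintegral_le_lintegral_sq (hf : AEMeasurable f μ) :
    (∫⁻ a, f a ∂μ) ^ 2 ≤ ∫⁻ a, f a ^ 2 ∂μ := by
  calc (∫⁻ a, f a ∂μ) ^ 2 ≤ ((∫⁻ a, f a ^ 2 ∂μ) ^ (1 / 2 : ℝ)) ^ 2 := by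
        gcongr; exact lintegral_le_rpow_half_lintegral_sq hf
    _ = ∫⁻ a, f a ^ 2 ∂μ := ENNReal.rpow_half_pow_two _

lemma lintegral_add_const_sq_le (hf : AEMeasurable f μ) (c : ℝ≥0∞) :
    ∫⁻ a, (f a + c) ^ 2 ∂μ ≤ ((∫⁻ a, f a ^ 2 ∂μ) ^ (1 / 2 : ℝ) + c) ^ 2 := by
  set S := (∫⁻ a, f a ^ 2 ∂μ) ^ (1 / 2 : ℝ)
  calc ∫⁻ a, (f a + c) ^ 2 ∂μ = ∫⁻ a, (f a ^ 2 + (2 * c * f a + c ^ 2)) ∂μ := by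
        congr 1; funext a; ring
    _ = ∫⁻ a, f a ^ 2 ∂μ + (2 * c * ∫⁻ a, f a ∂μ + c ^ 2) := by
        rw [lintegral_add_left' (hf.pow_const 2), lintegral_add_right _ measurable_const,
          lintegral_const_mul'' _ hf, lintegral_const, measure_univ, mul_one]
    _ ≤ S ^ 2 + (2 * c * S + c ^ 2) := by
        gcongr
        · exact (ENNReal.rpow_half_pow_two _).ge
        · exact lintegral_le_rpow_half_lintegral_sq hf
    _ = (S + c) ^ 2 := by ring

end ProbabilityMeasure

section MetricSpace

variable {X : Type*} [MetricSpace X] [MeasurableSpace X]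

lemma measurable_lintegral_edist [OpensMeasurableSpace X] (ρ : Measure X) [IsFiniteMeasure ρ] :
    Measurable fun x => ∫⁻ y, edist x y ∂ρ := by
  refine (continuous_of_le_add_edist (ρ Set.univ) (measure_ne_top ρ _) fun x x' => ?_).measurable
  calc ∫⁻ y, edist x y ∂ρ ≤ ∫⁻ y, (edist x' y + edist x x') ∂ρ :=
        lintegral_mono fun y => (edist_triangle x x' y).trans_eq (add_comm _ _)
    _ = ∫⁻ y, edist x' y ∂ρ + ρ Set.univ * edist x x' := by
        rw [lintegral_add_right _ measurable_const, lintegral_const, mul_comm]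

variable (μ ν : Measure X) [IsProbabilityMeasure μ] [IsProbabilityMeasure ν]

lemma edist_le_lintegral_edist_add_lintegral_lintegral_edist_add [OpensMeasurableSpace X]
    (x y : X) :
    edist x y ≤ ∫⁻ x', edist x x' ∂μ + ∫⁻ x', ∫⁻ y', edist x' y' ∂ν ∂μ + ∫⁻ y', edist y y' ∂ν := by
  calc edist x y = ∫⁻ x', ∫⁻ y', edist x y ∂ν ∂μ := by simp
    _ ≤ ∫⁻ x', ∫⁻ y', (edist x x' + edist x' y' + edist y y') ∂ν ∂μ := by
        gcongr with x' y'
        exact (edist_triangle4 x x' y' y).trans_eq (by rw [edist_comm y' y])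
    _ = ∫⁻ x', (edist x x' + ∫⁻ y', edist x' y' ∂ν + ∫⁻ y', edist y y' ∂ν) ∂μ := by
        congr 1; funext x'
        rw [lintegral_add_right _ measurable_edist_right, lintegral_add_left measurable_const,
          lintegral_const, measure_univ, mul_one]
    _ = _ := by
        rw [lintegral_add_right _ measurable_const, lintegral_add_left measurable_edist_right,
          lintegral_const, measure_univ, mul_one]

lemma lintegral_lintegral_edist_le_rpow_half_var [OpensMeasurableSpace X] :
    ∫⁻ x, ∫⁻ y, edist x y ∂ν ∂μ ≤ Var μ ν ^ (1 / 2 : ℝ) :=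
  calc ∫⁻ x, ∫⁻ y, edist x y ∂ν ∂μ ≤ (∫⁻ x, (∫⁻ y, edist x y ∂ν) ^ 2 ∂μ) ^ (1 / 2 : ℝ) :=
        lintegral_le_rpow_half_lintegral_sq (measurable_lintegral_edist ν).aemeasurable
    _ ≤ Var μ ν ^ (1 / 2 : ℝ) := by
        unfold Var
        gcongr with x
        exact sq_lintegral_le_lintegral_sq (by fun_prop)

lemma rpow_half_var_le [OpensMeasurableSpace X] :
    Var μ ν ^ (1 / 2 : ℝ) ≤
      Var μ μ ^ (1 / 2 : ℝ) + ∫⁻ x, ∫⁻ y, edist x y ∂ν ∂μ + Var ν ν ^ (1 / 2 : ℝ) := by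
  set A := ∫⁻ x, ∫⁻ y, edist x y ∂ν ∂μ
  set D := fun x => ∫⁻ x', edist x x' ∂μ
  set E := fun y => ∫⁻ y', edist y y' ∂ν
  have hD : ∫⁻ x, D x ^ 2 ∂μ ≤ Var μ μ :=
    lintegral_mono fun x => sq_lintegral_le_lintegral_sq (by fun_prop)
  have hE : ∫⁻ y, E y ^ 2 ∂ν ≤ Var ν ν :=
    lintegral_mono fun y => sq_lintegral_le_lintegral_sq (by fun_prop)
  rw [← ENNReal.pow_two_rpow_half (_ + _ + _)]
  gcongr
  calc Var μ ν = ∫⁻ x, ∫⁻ y, edist x y ^ 2 ∂ν ∂μ := rfl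
    _ ≤ ∫⁻ x, ∫⁻ y, (E y + (D x + A)) ^ 2 ∂ν ∂μ := by
        gcongr with x y
        exact (edist_le_lintegral_edist_add_lintegral_lintegral_edist_add μ ν x y).trans_eq
          (by ring)
    _ ≤ ∫⁻ x, ((∫⁻ y, E y ^ 2 ∂ν) ^ (1 / 2 : ℝ) + (D x + A)) ^ 2 ∂μ := by
        gcongr with x
        exact lintegral_add_const_sq_le (measurable_lintegral_edist ν).aemeasurable _
    _ = ∫⁻ x, (D x + (A + (∫⁻ y, E y ^ 2 ∂ν) ^ (1 / 2 : ℝ))) ^ 2 ∂μ := by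
        congr 1; funext x; ring
    _ ≤ ((∫⁻ x, D x ^ 2 ∂μ) ^ (1 / 2 : ℝ) + (A + (∫⁻ y, E y ^ 2 ∂ν) ^ (1 / 2 : ℝ))) ^ 2 :=
        lintegral_add_const_sq_le (measurable_lintegral_edist μ).aemeasurable _
    _ ≤ (Var μ μ ^ (1 / 2 : ℝ) + A + Var ν ν ^ (1 / 2 : ℝ)) ^ 2 := by
        rw [← add_assoc]; gcongr

lemma var_self_le_four_mul (z : X) : Var μ μ ≤ 4 * ∫⁻ y, edist z y ^ 2 ∂μ := by
  calc Var μ μ = ∫⁻ y, ∫⁻ y', edist y y' ^ 2 ∂μ ∂μ := rfl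
    _ ≤ ∫⁻ y, ∫⁻ y', 2 * (edist z y ^ 2 + edist z y' ^ 2) ∂μ ∂μ := by
        gcongr with y y'
        calc edist y y' ^ 2 ≤ (edist z y + edist z y') ^ 2 := by
              gcongr; exact edist_triangle_left _ _ _
          _ ≤ _ := ENNReal.add_sq_le _ _
    _ = ∫⁻ y, 2 * (edist z y ^ 2 + ∫⁻ y', edist z y' ^ 2 ∂μ) ∂μ := by
        congr 1; funext y
        rw [lintegral_const_mul' _ _ ENNReal.ofNat_ne_top, lintegral_add_left measurable_const,
          lintegral_const, measure_univ, mul_one]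
    _ = 4 * ∫⁻ y, edist z y ^ 2 ∂μ := by
        rw [lintegral_const_mul' _ _ ENNReal.ofNat_ne_top, lintegral_add_right _ measurable_const,
          lintegral_const, measure_univ, mul_one, ← two_mul, ← mul_assoc]
        norm_num

lemma lintegral_sq_edist_le [OpensMeasurableSpace X] (z : X) :
    ∫⁻ x, edist z x ^ 2 ∂μ ≤ 2 * (Var μ ν + ∫⁻ y, edist z y ^ 2 ∂ν) := by
  calc ∫⁻ x, edist z x ^ 2 ∂μ = ∫⁻ x, ∫⁻ y, edist z x ^ 2 ∂ν ∂μ := by simp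
    _ ≤ ∫⁻ x, ∫⁻ y, 2 * (edist x y ^ 2 + edist z y ^ 2) ∂ν ∂μ := by
        gcongr with x y
        calc edist z x ^ 2 ≤ (edist x y + edist z y) ^ 2 := by
              gcongr; exact (edist_triangle_right z x y).trans_eq (add_comm _ _)
          _ ≤ _ := ENNReal.add_sq_le _ _
    _ = ∫⁻ x, 2 * (∫⁻ y, edist x y ^ 2 ∂ν + ∫⁻ y, edist z y ^ 2 ∂ν) ∂μ := by
        congr 1; funext x
        rw [lintegral_const_mul' _ _ ENNReal.ofNat_ne_top,
          lintegral_add_left (measurable_edist_right.pow_const 2)]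
    _ = 2 * (Var μ ν + ∫⁻ y, edist z y ^ 2 ∂ν) := by
        rw [lintegral_const_mul' _ _ ENNReal.ofNat_ne_top, lintegral_add_right _ measurable_const,
          lintegral_const, measure_univ, mul_one, Var]

end MetricSpace

section Finiteness

variable {X : Type*} [MetricSpace X] [MeasurableSpace X] {μ ν : Measure X}

lemma exists_lintegral_sq_edist_ne_top [NeZero μ] (h : Var μ ν ≠ ∞) :
    ∃ z, ∫⁻ y, edist z y ^ 2 ∂ν ≠ ∞ := by
  by_contra! hz
  exact h (by simp [Var, hz, ENNReal.top_mul, NeZero.ne])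

variable [IsProbabilityMeasure μ] [IsProbabilityMeasure ν]

lemma var_self_ne_top_left [OpensMeasurableSpace X] (h : Var μ ν ≠ ∞) : Var μ μ ≠ ∞ := by
  obtain ⟨z, hz⟩ := exists_lintegral_sq_edist_ne_top h
  have hμz : ∫⁻ x, edist z x ^ 2 ∂μ ≠ ∞ :=
    ne_top_of_le_ne_top (by finiteness) (lintegral_sq_edist_le μ ν z)
  exact ne_top_of_le_ne_top (by finiteness) (var_self_le_four_mul μ z)

lemma var_self_ne_top_right (h : Var μ ν ≠ ∞) : Var ν ν ≠ ∞ := by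
  obtain ⟨z, hz⟩ := exists_lintegral_sq_edist_ne_top h
  exact ne_top_of_le_ne_top (by finiteness) (var_self_le_four_mul ν z)

end Finiteness

/-- For probability measures `ν₁, ν₂` with `Var(ν₁, ν₂) < ∞`,
`|∫∫ d(x₁, x₂) dν₁(x₁) dν₂(x₂) − √Var(ν₁, ν₂)| ≤ √Var(ν₁) + √Var(ν₂)`. -/
theorem abs_double_int_sub_sqrt_var_le {X : Type*} [MetricSpace X] [MeasurableSpace X]
    [BorelSpace X] (ν₁ ν₂ : Measure X) [IsProbabilityMeasure ν₁] [IsProbabilityMeasure ν₂]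
    (h : Var ν₁ ν₂ ≠ ∞) :
    |(∫⁻ x, ∫⁻ y, edist x y ∂ν₂ ∂ν₁).toReal - (Var ν₁ ν₂ ^ (1 / 2 : ℝ)).toReal|
      ≤ (Var ν₁ ν₁ ^ (1 / 2 : ℝ)).toReal + (Var ν₂ ν₂ ^ (1 / 2 : ℝ)).toReal := by
  have h₁ := var_self_ne_top_left h
  have h₂ := var_self_ne_top_right h
  exact ENNReal.abs_toReal_sub_le_of_le_of_le_add (by finiteness) (by finiteness)
    (by finiteness) (lintegral_lintegral_edist_le_rpow_half_var ν₁ ν₂) (rpow_half_var_le ν₁ ν₂)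
end

section
/- Let (X, d) be a complete separable metric space and μᵢ probability measures with μᵢ → μ_∞ in the 1-Wasserstein distance. Then for every ε ∈ (0,1] and r > 0, the mass distribution functions satisfy b^{μ_∞}_r(ε) ≥ limsup_{i→∞} b^{μᵢ}_r(ε). -/
open scoped ENNReal

open MeasureTheory Filter

/-- The mass distribution function at scale `r` of a metric measure space `(X, d, μ)`:
`b_r(ε) = sup { δ ∈ (0,1] : μ({x : μ(D(x, εr)) < δ}) ≤ ε }`,
where `D(x, s)` denotes the closed ball of radius `s`. -/
noncomputable def massDist {X : Type*} [MetricSpace X] [MeasurableSpace X]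
    (μ : Measure X) (r ε : ℝ) : ℝ :=
  sSup {δ : ℝ | δ ∈ Set.Ioc (0 : ℝ) 1 ∧
    μ {x : X | μ (Metric.closedBall x (ε * r)) < ENNReal.ofReal δ} ≤ ENNReal.ofReal ε}

lemma aux_iInter_closedBall {X : Type*} [MetricSpace X] (x : X) (s : ℝ) :
    ⋂ n : ℕ, Metric.closedBall x (s + 1/(n+1)) = Metric.closedBall x s := by
  ext y
  simp only [Set.mem_iInter, Metric.mem_closedBall]
  constructor
  · intro h
    refine le_of_forall_pos_le_add fun c hc => ?_
    obtain ⟨n, hn⟩ := exists_nat_one_div_lt hc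
    exact (h n).trans (by linarith)
  · intro h n
    have : (0:ℝ) < 1/(n+1) := by positivity
    linarith

lemma aux_tendsto_closedBall {X : Type*} [MetricSpace X] [MeasurableSpace X]
    [OpensMeasurableSpace X] (μ : Measure X) [IsFiniteMeasure μ] (x : X) (s : ℝ) :
    Tendsto (fun n : ℕ => μ (Metric.closedBall x (s + 1/(n+1)))) atTop
      (nhds (μ (Metric.closedBall x s))) := by
  have h := tendsto_measure_iInter_atTop (μ := μ)
      (s := fun n : ℕ => Metric.closedBall x (s + 1/(n+1)))
      (fun n => measurableSet_closedBall.nullMeasurableSet)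
      (fun a b hab => Metric.closedBall_subset_closedBall (by
        have h1 : (a:ℝ) + 1 ≤ (b:ℝ) + 1 := by exact_mod_cast Nat.succ_le_succ hab
        have h2 : (1:ℝ)/(b+1) ≤ 1/(a+1) := one_div_le_one_div_of_le (by positivity) h1
        linarith))
      ⟨0, measure_ne_top μ _⟩
  rwa [aux_iInter_closedBall] at h

lemma aux_isOpen_lt {X : Type*} [MetricSpace X] [MeasurableSpace X]
    [OpensMeasurableSpace X] (μ : Measure X) [IsFiniteMeasure μ] (s : ℝ) (c : ℝ≥0∞) :
    IsOpen {x : X | μ (Metric.closedBall x s) < c} := by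
  rw [Metric.isOpen_iff]
  intro x hx
  obtain ⟨n, hn⟩ := ((aux_tendsto_closedBall μ x s).eventually (gt_mem_nhds hx)).exists
  refine ⟨1/(n+1), by positivity, fun y hy => ?_⟩
  have hsub : Metric.closedBall y s ⊆ Metric.closedBall x (s + 1/(n+1)) :=
    Metric.closedBall_subset_closedBall' (by
      have := Metric.mem_ball.mp hy
      linarith)
  exact lt_of_le_of_lt (measure_mono hsub) hn

lemma key_estimate {X : Type*} [MetricSpace X] [SecondCountableTopology X]
    [MeasurableSpace X] [BorelSpace X]
    (μi μ' : Measure X) [IsProbabilityMeasure μi] [IsProbabilityMeasure μ']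
    (s η δ δ₁ ε : ℝ) (hη : 0 < η) (hδ0 : 0 < δ) (hδ : δ < δ₁)
    (θ : ℝ≥0∞) (hθ : θ ≤ ENNReal.ofReal (δ₁ - δ))
    (q : Measure (X × X)) (hq1 : q.map Prod.fst = μi) (hq2 : q.map Prod.snd = μ')
    (hcost : ∫⁻ p, edist p.1 p.2 ∂q < ENNReal.ofReal η * θ)
    (hB : μi {x | μi (Metric.closedBall x s) < ENNReal.ofReal δ₁} ≤ ENNReal.ofReal ε) :
    μ' {x | μ' (Metric.closedBall x (s + 2*η)) < ENNReal.ofReal δ} ≤ ENNReal.ofReal ε + θ := by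
  have hη0 : ENNReal.ofReal η ≠ 0 := (ENNReal.ofReal_pos.mpr hη).ne'
  have hηtop : ENNReal.ofReal η ≠ ∞ := ENNReal.ofReal_ne_top
  set G : Set (X × X) := {p | ENNReal.ofReal η ≤ edist p.1 p.2} with hGdef
  have hedist : Measurable fun p : X × X => edist p.1 p.2 :=
    (continuous_edist.comp (continuous_fst.prodMk continuous_snd)).measurable
  have hGle : q G ≤ (∫⁻ p, edist p.1 p.2 ∂q) / ENNReal.ofReal η :=
    meas_ge_le_lintegral_div hedist.aemeasurable hη0 hηtop
  have hGθ : q G < θ := by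
    refine lt_of_le_of_lt hGle ?_
    rw [ENNReal.div_lt_iff (Or.inl hη0) (Or.inl hηtop)]
    rwa [mul_comm] at hcost
  set B : Set X := {x | μi (Metric.closedBall x s) < ENNReal.ofReal δ₁} with hBdef
  have hBmeas : MeasurableSet B := (aux_isOpen_lt μi s _).measurableSet
  set A : Set X := {x | μ' (Metric.closedBall x (s + 2*η)) < ENNReal.ofReal δ} with hAdef
  have hAmeas : MeasurableSet A := (aux_isOpen_lt μ' _ _).measurableSet
  have hincl : Prod.snd ⁻¹' A ⊆ G ∪ Prod.fst ⁻¹' B := by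
    intro p hp
    by_contra hcon
    rw [Set.mem_union] at hcon
    push_neg at hcon
    obtain ⟨hpG, hpB⟩ := hcon
    have hpG' : edist p.1 p.2 < ENNReal.ofReal η := lt_of_not_ge hpG
    have hd12 : dist p.1 p.2 < η := edist_lt_ofReal.mp hpG'
    have hpB' : ENNReal.ofReal δ₁ ≤ μi (Metric.closedBall p.1 s) := not_lt.mp hpB
    have h1 : μi (Metric.closedBall p.1 s) = q (Prod.fst ⁻¹' Metric.closedBall p.1 s) := by
      rw [← hq1, Measure.map_apply measurable_fst measurableSet_closedBall]
    have h2 : q (Prod.fst ⁻¹' Metric.closedBall p.1 s) ≤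
        q ((Prod.fst ⁻¹' Metric.closedBall p.1 s) \ G) + q G := by
      refine (measure_le_inter_add_diff q _ G).trans ?_
      rw [add_comm]
      exact add_le_add le_rfl (measure_mono Set.inter_subset_right)
    have h3 : (Prod.fst ⁻¹' Metric.closedBall p.1 s) \ G ⊆
        Prod.snd ⁻¹' Metric.closedBall p.2 (s + 2*η) := by
      rintro p' ⟨hp1, hp2⟩
      have hd' : dist p'.1 p'.2 < η := edist_lt_ofReal.mp (lt_of_not_ge hp2)
      have hb : dist p'.1 p.1 ≤ s := Metric.mem_closedBall.mp hp1
      have : dist p'.2 p.2 ≤ dist p'.2 p'.1 + dist p'.1 p.1 + dist p.1 p.2 := dist_triangle4 _ _ _ _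
      have : dist p'.2 p.2 ≤ s + 2*η := by
        rw [dist_comm p'.2 p'.1] at this
        linarith
      exact Metric.mem_closedBall.mpr this
    have h4 : q (Prod.snd ⁻¹' Metric.closedBall p.2 (s + 2*η)) =
        μ' (Metric.closedBall p.2 (s + 2*η)) := by
      rw [← hq2, Measure.map_apply measurable_snd measurableSet_closedBall]
    have hA' : μ' (Metric.closedBall p.2 (s + 2*η)) < ENNReal.ofReal δ := hp
    have : ENNReal.ofReal δ₁ < ENNReal.ofReal δ + ENNReal.ofReal (δ₁ - δ) := by
      calc ENNReal.ofReal δ₁ ≤ μi (Metric.closedBall p.1 s) := hpB'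
        _ ≤ q ((Prod.fst ⁻¹' Metric.closedBall p.1 s) \ G) + q G := by rw [h1]; exact h2
        _ ≤ μ' (Metric.closedBall p.2 (s + 2*η)) + q G := by
            rw [← h4]; exact add_le_add (measure_mono h3) le_rfl
        _ < ENNReal.ofReal δ + θ := ENNReal.add_lt_add hA' hGθ
        _ ≤ ENNReal.ofReal δ + ENNReal.ofReal (δ₁ - δ) := add_le_add le_rfl hθ
    rw [← ENNReal.ofReal_add hδ0.le (sub_nonneg.mpr hδ.le), add_sub_cancel] at this
    exact lt_irrefl _ this
  calc μ' A = q (Prod.snd ⁻¹' A) := by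
        rw [← hq2, Measure.map_apply measurable_snd hAmeas]
    _ ≤ q (G ∪ Prod.fst ⁻¹' B) := measure_mono hincl
    _ ≤ q G + q (Prod.fst ⁻¹' B) := measure_union_le _ _
    _ ≤ θ + μi B := by
        rw [← hq1, Measure.map_apply measurable_fst hBmeas]
        exact add_le_add hGθ.le le_rfl
    _ ≤ θ + ENNReal.ofReal ε := add_le_add le_rfl hB
    _ = ENNReal.ofReal ε + θ := add_comm _ _

/-- If probability measures `μᵢ` on a complete separable metric space converge to `μ_∞` in the
1-Wasserstein distance, then for every `ε ∈ (0,1]` and `r > 0`,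
`b^{μ_∞}_r(ε) ≥ limsup b^{μᵢ}_r(ε)`. -/
theorem massDist_limsup_le {X : Type*} [MetricSpace X] [CompleteSpace X]
    [TopologicalSpace.SeparableSpace X] [MeasurableSpace X] [BorelSpace X]
    (μ : ℕ → Measure X) (μ' : Measure X) [∀ i, IsProbabilityMeasure (μ i)]
    [IsProbabilityMeasure μ']
    (h : Tendsto (fun i => W1 (μ i) μ') atTop (nhds 0))
    (ε r : ℝ) (hε : ε ∈ Set.Ioc (0 : ℝ) 1) (hr : 0 < r) :
    limsup (fun i => massDist (μ i) r ε) atTop ≤ massDist μ' r ε := by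
  haveI : SecondCountableTopology X := UniformSpace.secondCountable_of_separable X
  set T : Measure X → Set ℝ := fun ν => {δ : ℝ | δ ∈ Set.Ioc (0 : ℝ) 1 ∧
    ν {x : X | ν (Metric.closedBall x (ε * r)) < ENNReal.ofReal δ} ≤ ENNReal.ofReal ε} with hT
  have hmass : ∀ ν : Measure X, massDist ν r ε = sSup (T ν) := fun ν => rfl
  have hb0 : ∀ i, 0 ≤ massDist (μ i) r ε :=
    fun i => Real.sSup_nonneg fun x hx => hx.1.1.le
  apply le_of_forall_lt_imp_le_of_dense
  intro δ hδ
  rcases le_or_gt δ 0 with h0 | h0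
  · exact h0.trans (Real.sSup_nonneg fun x hx => hx.1.1.le)
  set β := limsup (fun i => massDist (μ i) r ε) atTop with hβ
  set δ₁ := (δ + β)/2 with hδ₁def
  have hδδ₁ : δ < δ₁ := by rw [hδ₁def]; linarith
  have hδ₁β : δ₁ < β := by rw [hδ₁def]; linarith
  have hcob : IsCoboundedUnder (· ≤ ·) atTop (fun i => massDist (μ i) r ε) :=
    isCoboundedUnder_le_of_le atTop hb0
  have hfreq0 : ∃ᶠ i in atTop, δ₁ < massDist (μ i) r ε :=
    frequently_lt_of_lt_limsup hcob hδ₁β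
  have hfreq : ∃ᶠ i in atTop,
      (μ i) {x : X | (μ i) (Metric.closedBall x (ε * r)) < ENNReal.ofReal δ₁} ≤ ENNReal.ofReal ε
      ∧ δ₁ < 1 := by
    refine hfreq0.mono fun i hi => ?_
    rw [hmass] at hi
    have hne : (T (μ i)).Nonempty := by
      by_contra hemp
      rw [Set.not_nonempty_iff_eq_empty] at hemp
      rw [hemp, Real.sSup_empty] at hi
      linarith
    obtain ⟨d, hd, hdgt⟩ := exists_lt_of_lt_csSup hne hi
    refine ⟨le_trans (measure_mono ?_) hd.2, lt_of_lt_of_le hdgt hd.1.2⟩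
    intro x hx
    exact lt_of_lt_of_le hx (ENNReal.ofReal_le_ofReal hdgt.le)
  obtain ⟨i₀, _, hδ₁1⟩ := hfreq.exists
  have hδ1 : δ ≤ 1 := le_of_lt (hδδ₁.trans hδ₁1)
  -- It suffices to show δ ∈ T μ'
  rw [hmass]
  refine le_csSup ⟨1, fun x hx => hx.1.2⟩ ⟨⟨h0, hδ1⟩, ?_⟩
  set s := ε * r with hsdef
  have hs0 : 0 < s := mul_pos hε.1 hr
  set An : ℕ → Set X :=
    fun n => {x | μ' (Metric.closedBall x (s + 2*(1/(n+1)))) < ENNReal.ofReal δ} with hAn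
  have hmono : Monotone An := by
    intro a b hab x hx
    refine lt_of_le_of_lt (measure_mono (Metric.closedBall_subset_closedBall ?_)) hx
    have h1 : (a:ℝ) + 1 ≤ (b:ℝ) + 1 := by exact_mod_cast Nat.succ_le_succ hab
    have h2 : (1:ℝ)/(b+1) ≤ 1/(a+1) := one_div_le_one_div_of_le (by positivity) h1
    linarith
  have hsub : {x : X | μ' (Metric.closedBall x s) < ENNReal.ofReal δ} ⊆ ⋃ n, An n := by
    intro x hx
    obtain ⟨m, hm⟩ := ((aux_tendsto_closedBall μ' x s).eventually (gt_mem_nhds hx)).exists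
    refine Set.mem_iUnion.mpr ⟨2*m+1, ?_⟩
    have hrad : (2:ℝ)*(1/((2*m+1 : ℕ)+1)) = 1/((m:ℕ)+1) := by
      push_cast
      have h2m : (2:ℝ)*(m:ℝ)+1+1 = 2*((m:ℝ)+1) := by ring
      rw [h2m]
      field_simp
    show μ' (Metric.closedBall x (s + 2*(1/((2*m+1 : ℕ)+1)))) < ENNReal.ofReal δ
    rw [hrad]
    exact hm
  have hAnbound : ∀ n, μ' (An n) ≤ ENNReal.ofReal ε := by
    intro n
    set η := (1:ℝ)/(n+1) with hηdef
    have hη : 0 < η := by positivity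
    refine ENNReal.le_of_forall_pos_le_add fun ζ hζ _ => ?_
    set θ : ℝ≥0∞ := min (ENNReal.ofReal (δ₁ - δ)) (ζ : ℝ≥0∞) with hθdef
    have hθpos : 0 < θ :=
      lt_min (ENNReal.ofReal_pos.mpr (sub_pos.mpr hδδ₁)) (ENNReal.coe_pos.mpr hζ)
    have hev : ∀ᶠ i in atTop, W1 (μ i) μ' < ENNReal.ofReal η * θ :=
      h.eventually (gt_mem_nhds (ENNReal.mul_pos (ENNReal.ofReal_pos.mpr hη).ne' hθpos.ne'))
    obtain ⟨i, ⟨hiB, _⟩, hiW⟩ := (hfreq.and_eventually hev).exists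
    rw [W1, iInf_lt_iff] at hiW
    obtain ⟨q, hiW⟩ := hiW
    rw [iInf_lt_iff] at hiW
    obtain ⟨⟨hq1, hq2⟩, hcost⟩ := hiW
    have := key_estimate (μ i) μ' s η δ δ₁ ε hη h0 hδδ₁ θ (min_le_left _ _) q hq1 hq2 hcost hiB
    exact this.trans (add_le_add le_rfl (min_le_right _ _))
  calc μ' {x : X | μ' (Metric.closedBall x s) < ENNReal.ofReal δ}
      ≤ μ' (⋃ n, An n) := measure_mono hsub
    _ = ⨆ n, μ' (An n) := hmono.measure_iUnion
    _ ≤ ENNReal.ofReal ε := iSup_le hAnbound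
end

section
/- Let (X₁, d₁, μ₁) and (X₂, d₂, μ₂) be metric measure spaces, let φᵢ : Xᵢ → Z be isometric embeddings into a common metric space (Z, d_Z), and let q be a coupling between μ₁ and μ₂. Then |∫∫ d₁(x,y) dμ₁(x) dμ₁(y) − ∫∫ d₂(x,y) dμ₂(x) dμ₂(y)| ≤ 2 ∫_{X₁×X₂} d_Z(φ₁(x), φ₂(y)) dq(x, y). -/
open scoped ENNReal

open MeasureTheory

/-!
Push both double integrals forward to the coupling `q`: they become
`∫∫ d(xᵢ, xᵢ') dq(x₁, x₂) dq(x₁', x₂')`. Through the embeddings into `Z`, the triangle inequality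
gives `d₁(x₁, x₁') ≤ d_Z(φ₁ x₁, φ₂ x₂) + d₂(x₂, x₂') + d_Z(φ₁ x₁', φ₂ x₂')`, and integrating
against `q ⊗ q` yields each one-sided bound.
-/

theorem Isometry.edist_le_edist_add_edist_add_edist {X Y Z : Type*} [PseudoEMetricSpace X]
    [PseudoEMetricSpace Y] [PseudoEMetricSpace Z] {f : X → Z} {g : Y → Z}
    (hf : Isometry f) (hg : Isometry g) (x x' : X) (y y' : Y) :
    edist x x' ≤ edist (f x) (g y) + edist y y' + edist (f x') (g y') := by
  calc edist x x' = edist (f x) (f x') := (hf.edist_eq x x').symm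
    _ ≤ edist (f x) (g y) + edist (g y) (g y') + edist (g y') (f x') := edist_triangle4 _ _ _ _
    _ = edist (f x) (g y) + edist y y' + edist (f x') (g y') := by
      rw [hg.edist_eq, edist_comm (g y')]

theorem continuous_lintegral_edist {X : Type*} [PseudoEMetricSpace X] [MeasurableSpace X]
    (ν : Measure X) [IsFiniteMeasure ν] :
    Continuous fun x => ∫⁻ y, edist x y ∂ν := by
  refine continuous_of_le_add_edist (ν Set.univ) (measure_ne_top ν _) fun x x' => ?_
  calc ∫⁻ y, edist x y ∂ν ≤ ∫⁻ y, edist x' y + edist x x' ∂ν :=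
        lintegral_mono fun y => (edist_triangle x x' y).trans_eq (add_comm _ _)
    _ = ∫⁻ y, edist x' y ∂ν + ν Set.univ * edist x x' := by
      rw [lintegral_add_right _ measurable_const, lintegral_const, mul_comm]

theorem lintegral_lintegral_edist_map {Ω X : Type*} [MeasurableSpace Ω] [PseudoEMetricSpace X]
    [MeasurableSpace X] [OpensMeasurableSpace X] (q : Measure Ω) [IsFiniteMeasure q]
    {π : Ω → X} (hπ : Measurable π) :
    ∫⁻ x, ∫⁻ y, edist x y ∂q.map π ∂q.map π = ∫⁻ ω, ∫⁻ ω', edist (π ω) (π ω') ∂q ∂q := by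
  rw [lintegral_map (continuous_lintegral_edist _).measurable hπ]
  exact lintegral_congr fun ω => lintegral_map measurable_edist_right hπ

theorem measurable_lintegral_edist_comp {Ω X : Type*} [MeasurableSpace Ω] [PseudoEMetricSpace X]
    [MeasurableSpace X] [OpensMeasurableSpace X] (q : Measure Ω) [IsFiniteMeasure q]
    {π : Ω → X} (hπ : Measurable π) : Measurable fun ω => ∫⁻ ω', edist (π ω) (π ω') ∂q := by
  simp_rw [← lintegral_map measurable_edist_right hπ]
  exact (continuous_lintegral_edist _).measurable.comp hπ

theorem lintegral_lintegral_le_of_le_add_add {Ω : Type*} [MeasurableSpace Ω] (q : Measure Ω)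
    [IsProbabilityMeasure q] {a b : Ω → Ω → ℝ≥0∞} {F : Ω → ℝ≥0∞}
    (hb : ∀ ω, Measurable (b ω)) (hb_int : Measurable fun ω => ∫⁻ ω', b ω ω' ∂q)
    (hab : ∀ ω ω', a ω ω' ≤ F ω + b ω ω' + F ω') :
    ∫⁻ ω, ∫⁻ ω', a ω ω' ∂q ∂q ≤ ∫⁻ ω, ∫⁻ ω', b ω ω' ∂q ∂q + 2 * ∫⁻ ω, F ω ∂q := by
  set C := ∫⁻ ω, F ω ∂q
  have inner (ω : Ω) : ∫⁻ ω', F ω + b ω ω' + F ω' ∂q = (∫⁻ ω', b ω ω' ∂q + C) + F ω := by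
    rw [lintegral_add_left (f := fun ω' => F ω + b ω ω') (measurable_const.add (hb ω)),
      lintegral_add_left measurable_const, lintegral_const, measure_univ, mul_one]
    ring
  calc ∫⁻ ω, ∫⁻ ω', a ω ω' ∂q ∂q ≤ ∫⁻ ω, ∫⁻ ω', F ω + b ω ω' + F ω' ∂q ∂q :=
        lintegral_mono fun ω => lintegral_mono (hab ω)
    _ = ∫⁻ ω, ∫⁻ ω', b ω ω' ∂q ∂q + 2 * C := by
      simp_rw [inner]
      rw [lintegral_add_left (hb_int.add_const C), lintegral_add_right _ measurable_const,
        lintegral_const, measure_univ, mul_one, two_mul, add_assoc]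

theorem abs_double_int_diff_le_two_coupling_int_general {X₁ X₂ Z : Type*}
    [MetricSpace X₁] [MeasurableSpace X₁] [BorelSpace X₁]
    [MetricSpace X₂] [MeasurableSpace X₂] [BorelSpace X₂] [MetricSpace Z]
    (μ₁ : Measure X₁) (μ₂ : Measure X₂)
    [IsProbabilityMeasure μ₁] [IsProbabilityMeasure μ₂]
    (φ₁ : X₁ → Z) (φ₂ : X₂ → Z) (hφ₁ : Isometry φ₁) (hφ₂ : Isometry φ₂)
    (q : Measure (X₁ × X₂)) (hq : q.map Prod.fst = μ₁ ∧ q.map Prod.snd = μ₂) :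
    (∫⁻ x, ∫⁻ y, edist x y ∂μ₁ ∂μ₁
        ≤ ∫⁻ x, ∫⁻ y, edist x y ∂μ₂ ∂μ₂ + 2 * ∫⁻ p, edist (φ₁ p.1) (φ₂ p.2) ∂q) ∧
      (∫⁻ x, ∫⁻ y, edist x y ∂μ₂ ∂μ₂
        ≤ ∫⁻ x, ∫⁻ y, edist x y ∂μ₁ ∂μ₁ + 2 * ∫⁻ p, edist (φ₁ p.1) (φ₂ p.2) ∂q) := by
  obtain ⟨rfl, rfl⟩ := hq
  have : IsProbabilityMeasure q := Measure.isProbabilityMeasure_of_map Prod.fst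
  rw [lintegral_lintegral_edist_map q measurable_fst,
    lintegral_lintegral_edist_map q measurable_snd]
  constructor
  · exact lintegral_lintegral_le_of_le_add_add q
      (fun p => measurable_edist_right.comp measurable_snd)
      (measurable_lintegral_edist_comp q measurable_snd)
      fun p p' => hφ₁.edist_le_edist_add_edist_add_edist hφ₂ p.1 p'.1 p.2 p'.2
  · refine lintegral_lintegral_le_of_le_add_add q
      (fun p => measurable_edist_right.comp measurable_fst)
      (measurable_lintegral_edist_comp q measurable_fst) fun p p' => ?_
    simpa only [edist_comm (φ₂ _)] using
      hφ₂.edist_le_edist_add_edist_add_edist hφ₁ p.2 p'.2 p.1 p'.1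

/-- Let `φᵢ : Xᵢ → Z` be isometric embeddings of two metric measure spaces into a common
metric space and let `q` be a coupling of `μ₁, μ₂`. If the double integrals
`∫∫ dᵢ dμᵢ dμᵢ` are finite, then
`|∫∫ d₁ dμ₁ dμ₁ − ∫∫ d₂ dμ₂ dμ₂| ≤ 2 ∫ d_Z(φ₁(x), φ₂(y)) dq(x, y)`,
stated here as the pair of one-sided inequalities in `ℝ≥0∞`. -/
theorem abs_double_int_diff_le_two_coupling_int {X₁ X₂ Z : Type*}
    [MetricSpace X₁] [MeasurableSpace X₁] [BorelSpace X₁]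
    [MetricSpace X₂] [MeasurableSpace X₂] [BorelSpace X₂] [MetricSpace Z]
    (μ₁ : Measure X₁) (μ₂ : Measure X₂)
    [IsProbabilityMeasure μ₁] [IsProbabilityMeasure μ₂]
    (φ₁ : X₁ → Z) (φ₂ : X₂ → Z) (hφ₁ : Isometry φ₁) (hφ₂ : Isometry φ₂)
    (q : Measure (X₁ × X₂)) (hq : q.map Prod.fst = μ₁ ∧ q.map Prod.snd = μ₂)
    (hfin₁ : ∫⁻ x, ∫⁻ y, edist x y ∂μ₁ ∂μ₁ ≠ ∞)
    (hfin₂ : ∫⁻ x, ∫⁻ y, edist x y ∂μ₂ ∂μ₂ ≠ ∞) :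
    (∫⁻ x, ∫⁻ y, edist x y ∂μ₁ ∂μ₁
        ≤ ∫⁻ x, ∫⁻ y, edist x y ∂μ₂ ∂μ₂ + 2 * ∫⁻ p, edist (φ₁ p.1) (φ₂ p.2) ∂q) ∧
      (∫⁻ x, ∫⁻ y, edist x y ∂μ₂ ∂μ₂
        ≤ ∫⁻ x, ∫⁻ y, edist x y ∂μ₁ ∂μ₁ + 2 * ∫⁻ p, edist (φ₁ p.1) (φ₂ p.2) ∂q) :=
  abs_double_int_diff_le_two_coupling_int_general μ₁ μ₂ φ₁ φ₂ hφ₁ hφ₂ q hq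
end

section
/- For all real numbers u ≥ 0 and A > 0, one has e^{(u+A)²/4} · ∫_{u−A}^{u+A} e^{−x²/4} dx ≥ (A/2) · e^{A²/16}. Consequently, if C > 0 satisfies 16A² ≤ C·e^{A²/16} for all A ≥ 0, then (e^{(u−A)²/4} + e^{(u+A)²/4}) · ∫_{u−A}^{u+A} e^{−x²/4} dx ≥ 8A³/C. -/
open scoped ENNReal

/-- For `u ≥ 0` and `A > 0`:
`e^{(u+A)²/4} ∫_{u−A}^{u+A} e^{−x²/4} dx ≥ (A/2) e^{A²/16}`; consequently, if `C > 0`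
satisfies `16A'² ≤ C e^{A'²/16}` for all `A' ≥ 0`, then
`(e^{(u−A)²/4} + e^{(u+A)²/4}) ∫_{u−A}^{u+A} e^{−x²/4} dx ≥ 8A³/C`. -/
theorem gaussian_integral_lower_bound (u A : ℝ) (hu : 0 ≤ u) (hA : 0 < A) :
    (A / 2 * Real.exp (A ^ 2 / 16)
        ≤ Real.exp ((u + A) ^ 2 / 4) * ∫ x in (u - A)..(u + A), Real.exp (-x ^ 2 / 4)) ∧
      ∀ C : ℝ, 0 < C → (∀ A' : ℝ, 0 ≤ A' → 16 * A' ^ 2 ≤ C * Real.exp (A' ^ 2 / 16)) →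
        8 * A ^ 3 / C
          ≤ (Real.exp ((u - A) ^ 2 / 4) + Real.exp ((u + A) ^ 2 / 4)) *
              ∫ x in (u - A)..(u + A), Real.exp (-x ^ 2 / 4) := by
  have hcont : Continuous fun x : ℝ => Real.exp (-x ^ 2 / 4) := by continuity
  set a := max (u - A) 0 with ha
  set b := a + A / 2 with hb
  clear_value a b
  have ha0 : 0 ≤ a := by rw [ha]; exact le_max_right _ _
  have hau : a ≤ u := by rw [ha]; exact max_le (by linarith) hu
  have hca : u - A ≤ a := by rw [ha]; exact le_max_left _ _
  have hab : a ≤ b := by rw [hb]; linarith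
  have hbd : b ≤ u + A := by rw [hb]; linarith
  have hI1 : IntervalIntegrable (fun x : ℝ => Real.exp (-x ^ 2 / 4))
      MeasureTheory.volume (u - A) (u + A) := hcont.intervalIntegrable _ _
  have key : A / 2 * Real.exp (-b ^ 2 / 4)
      ≤ ∫ x in (u - A)..(u + A), Real.exp (-x ^ 2 / 4) := by
    have h1 : (∫ _x in a..b, Real.exp (-b ^ 2 / 4)) ≤ ∫ x in a..b, Real.exp (-x ^ 2 / 4) := by
      apply intervalIntegral.integral_mono_on hab intervalIntegrable_const
        (hcont.intervalIntegrable _ _)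
      intro x hx
      apply Real.exp_le_exp.2
      have hx1 : 0 ≤ x := le_trans ha0 hx.1
      have hx2 : x ≤ b := hx.2
      have hxb : x ^ 2 ≤ b ^ 2 := pow_le_pow_left₀ hx1 hx2 2
      linarith
    have h2 : (∫ x in a..b, Real.exp (-x ^ 2 / 4))
        ≤ ∫ x in (u - A)..(u + A), Real.exp (-x ^ 2 / 4) := by
      apply intervalIntegral.integral_mono_interval hca hab hbd ?_ hI1
      filter_upwards with x using (Real.exp_pos _).le
    have h0 : (∫ _x in a..b, Real.exp (-b ^ 2 / 4)) = A / 2 * Real.exp (-b ^ 2 / 4) := by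
      rw [intervalIntegral.integral_const, hb, smul_eq_mul]
      ring
    linarith [h0 ▸ h1]
  have hexp : Real.exp (A ^ 2 / 16) * Real.exp (-(u + A) ^ 2 / 4)
      ≤ Real.exp (-b ^ 2 / 4) := by
    rw [← Real.exp_add]
    apply Real.exp_le_exp.2
    have hbub : b ≤ u + A / 2 := by rw [hb]; linarith
    nlinarith [sq_nonneg b]
  have main : A / 2 * Real.exp (A ^ 2 / 16)
      ≤ Real.exp ((u + A) ^ 2 / 4) * ∫ x in (u - A)..(u + A), Real.exp (-x ^ 2 / 4) := by
    have e1 : Real.exp ((u + A) ^ 2 / 4) * Real.exp (-(u + A) ^ 2 / 4) = 1 := by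
      rw [← Real.exp_add, show (u + A) ^ 2 / 4 + -(u + A) ^ 2 / 4 = 0 by ring, Real.exp_zero]
    have hE : (0:ℝ) < Real.exp ((u + A) ^ 2 / 4) := Real.exp_pos _
    calc A / 2 * Real.exp (A ^ 2 / 16)
        = Real.exp ((u + A) ^ 2 / 4) *
            (A / 2 * (Real.exp (A ^ 2 / 16) * Real.exp (-(u + A) ^ 2 / 4))) := by
          rw [show Real.exp ((u + A) ^ 2 / 4) *
            (A / 2 * (Real.exp (A ^ 2 / 16) * Real.exp (-(u + A) ^ 2 / 4)))
            = A / 2 * Real.exp (A ^ 2 / 16) *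
              (Real.exp ((u + A) ^ 2 / 4) * Real.exp (-(u + A) ^ 2 / 4)) by ring, e1]
          ring
      _ ≤ Real.exp ((u + A) ^ 2 / 4) * (A / 2 * Real.exp (-b ^ 2 / 4)) := by
          apply mul_le_mul_of_nonneg_left _ hE.le
          exact mul_le_mul_of_nonneg_left hexp (by linarith)
      _ ≤ Real.exp ((u + A) ^ 2 / 4) * ∫ x in (u - A)..(u + A), Real.exp (-x ^ 2 / 4) :=
          mul_le_mul_of_nonneg_left key hE.le
  refine ⟨main, fun C hC hCe => ?_⟩
  have hI0 : 0 ≤ ∫ x in (u - A)..(u + A), Real.exp (-x ^ 2 / 4) := by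
    apply intervalIntegral.integral_nonneg (by linarith)
    intro x _
    exact (Real.exp_pos _).le
  have h16 := hCe A hA.le
  have hstep : 8 * A ^ 3 / C ≤ A / 2 * Real.exp (A ^ 2 / 16) := by
    rw [div_le_iff₀ hC]
    nlinarith
  have hsum : Real.exp ((u + A) ^ 2 / 4) * (∫ x in (u - A)..(u + A), Real.exp (-x ^ 2 / 4))
      ≤ (Real.exp ((u - A) ^ 2 / 4) + Real.exp ((u + A) ^ 2 / 4)) *
        ∫ x in (u - A)..(u + A), Real.exp (-x ^ 2 / 4) := by
    apply mul_le_mul_of_nonneg_right _ hI0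
    linarith [(Real.exp_pos ((u - A) ^ 2 / 4)).le]
  linarith
end
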